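/- Let X be a Hermitian d×d matrix with Tr(X⁻) ≤ δ and P an orthogonal projection with Tr(PX) ≥ ‖X‖_{S1} − δ, and ‖X‖_{S1} ≤ 1, for 0 ≤ δ ≤ 1. Then ‖(Id − P)X⁺‖_{S1}² ≤ δ, where X⁺ is the positive part of X. -/

import Mathlib

/-!
Write `Q = 1 - P`. Hölder's inequality `‖AC‖₁ ≤ ‖A‖₂ ‖C‖₂`, applied to `QX⁺ = (Q √X⁺) √X⁺`,
gives `‖QX⁺‖₁² ≤ Tr(QX⁺) Tr(X⁺)`. Since `‖X‖₁ = Tr X⁺ + Tr X⁻` and `X⁻, P ≥ 0`, we get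
`Tr X⁺ ≤ ‖X‖₁ ≤ 1` and `Tr(QX⁺) = Tr X⁺ - Tr(PX) - Tr(PX⁻) ≤ ‖X‖₁ - Tr(PX) ≤ δ`.
Hölder's inequality is Cauchy–Schwarz for the trace inner product, once `‖M‖₁ = Tr(U⋆M)` is
written with a contraction `U` from the polar decomposition of `M`.
-/

open Matrix ComplexOrder

/-- The Frobenius norm of a complex square matrix: `(Tr(AᴴA))^{1/2}`. -/
noncomputable def frobNorm {d : ℕ} (A : Matrix (Fin d) (Fin d) ℂ) : ℝ :=
  Real.sqrt ((Aᴴ * A).trace.re)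

/-- The Schatten-1 (nuclear) norm: the sum of singular values, i.e. `Tr((AᴴA)^{1/2})`. -/
noncomputable def nucNorm {d : ℕ} (A : Matrix (Fin d) (Fin d) ℂ) : ℝ :=
  (((Matrix.posSemidef_conjTranspose_mul_self A).1.eigenvectorUnitary : Matrix (Fin d) (Fin d) ℂ) *
    Matrix.diagonal ((fun x : ℝ => (x : ℂ)) ∘ (Real.sqrt ∘ (Matrix.posSemidef_conjTranspose_mul_self A).1.eigenvalues)) *
    (star (Matrix.posSemidef_conjTranspose_mul_self A).1.eigenvectorUnitary :
      Matrix (Fin d) (Fin d) ℂ)).trace.re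


/-- The positive part `X⁺` of a Hermitian matrix, via the spectral decomposition. -/
noncomputable def posPart {d : ℕ} {X : Matrix (Fin d) (Fin d) ℂ} (hX : X.IsHermitian) :
    Matrix (Fin d) (Fin d) ℂ :=
  (hX.eigenvectorUnitary : Matrix (Fin d) (Fin d) ℂ) *
    Matrix.diagonal (fun i => ((max (hX.eigenvalues i) 0 : ℝ) : ℂ)) *
    (hX.eigenvectorUnitary : Matrix (Fin d) (Fin d) ℂ)ᴴ

/-- The negative part `X⁻` of a Hermitian matrix, via the spectral decomposition,
so that `X = X⁺ - X⁻`. -/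
noncomputable def negPart {d : ℕ} {X : Matrix (Fin d) (Fin d) ℂ} (hX : X.IsHermitian) :
    Matrix (Fin d) (Fin d) ℂ :=
  (hX.eigenvectorUnitary : Matrix (Fin d) (Fin d) ℂ) *
    Matrix.diagonal (fun i => ((max (-hX.eigenvalues i) 0 : ℝ) : ℂ)) *
    (hX.eigenvectorUnitary : Matrix (Fin d) (Fin d) ℂ)ᴴ

open scoped MatrixOrder

section RCLike

variable {n 𝕜 : Type*} [Fintype n] [RCLike 𝕜]

lemma Matrix.trace_mono {A B : Matrix n n 𝕜} (h : A ≤ B) : A.trace ≤ B.trace := by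
  simpa [trace_sub] using (Matrix.le_iff.mp h).trace_nonneg

variable [DecidableEq n]

lemma Matrix.trace_mul_nonneg {A B : Matrix n n 𝕜} (hA : 0 ≤ A) (hB : 0 ≤ B) :
    0 ≤ (A * B).trace := by
  have h := (hB.posSemidef.conjTranspose_mul_mul_same (CFC.sqrt A)).trace_nonneg
  rwa [(CFC.sqrt_nonneg A).posSemidef.1.eq, trace_mul_cycle, CFC.sqrt_mul_sqrt_self A hA] at h

-- Since `0⁻¹ = 0`, `G = cfc (√·)⁻¹ (A⋆A)` is the pseudo-inverse of `|A|`, and `U = A G` is a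
-- partial isometry with `U⋆A = |A|`.
lemma Matrix.exists_star_mul_le_one_and_star_mul_eq_abs (A : Matrix n n 𝕜) :
    ∃ U : Matrix n n 𝕜, star U * U ≤ 1 ∧ star U * A = CFC.abs A := by
  have hc (f : ℝ → ℝ) := (star A * A).finite_real_spectrum.continuousOn f
  set G := cfc (fun x : ℝ => (√x)⁻¹) (star A * A)
  have hG : star G = G := (cfc_predicate _ _ : IsSelfAdjoint G).star_eq
  have hGH : cfc (fun x : ℝ => (√x)⁻¹ * x) (star A * A) = G * (star A * A) := by
    rw [cfc_mul _ _ _ (hc _) (hc _), cfc_id' ℝ (star A * A)]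
  refine ⟨A * G, ?_, ?_⟩
  · have h : star (A * G) * (A * G) = cfc (fun x : ℝ => (√x)⁻¹ * x * (√x)⁻¹) (star A * A) := by
      rw [cfc_mul _ _ _ (hc _) (hc _), hGH, star_mul, hG]
      noncomm_ring
    rw [h]
    refine cfc_le_one _ _ fun x _ => ?_
    rw [← div_eq_inv_mul, Real.div_sqrt]
    exact mul_inv_le_one
  · have h : star (A * G) * A = cfc (fun x : ℝ => (√x)⁻¹ * x) (star A * A) := by
      rw [hGH, star_mul, hG, Matrix.mul_assoc]
    rw [h, CFC.abs, CFC.sqrt_eq_real_sqrt _ (star_mul_self_nonneg A), cfcₙ_eq_cfc]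
    exact cfc_congr fun x _ => by rw [← div_eq_inv_mul, Real.div_sqrt]

end RCLike

variable {d : ℕ}

lemma nucNorm_eq_re_trace_abs (A : Matrix (Fin d) (Fin d) ℂ) :
    nucNorm A = (CFC.abs A).trace.re := by
  have hA := posSemidef_conjTranspose_mul_self A
  change _ = (CFC.sqrt (Aᴴ * A)).trace.re
  rw [CFC.sqrt_eq_real_sqrt _ hA.nonneg, cfcₙ_eq_cfc, hA.1.cfc_eq, IsHermitian.cfc,
    Unitary.conjStarAlgAut_apply]
  rfl

lemma nucNorm_nonneg (A : Matrix (Fin d) (Fin d) ℂ) : 0 ≤ nucNorm A := by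
  rw [nucNorm_eq_re_trace_abs]
  exact RCLike.re_le_re (CFC.abs_nonneg A).posSemidef.trace_nonneg

lemma re_trace_conjTranspose_mul_self (A : Matrix (Fin d) (Fin d) ℂ) :
    (Aᴴ * A).trace.re = ∑ i, ∑ j, ‖A j i‖ ^ 2 := by
  simp [trace, mul_apply, Complex.re_sum, ← Complex.normSq_eq_norm_sq, Complex.normSq_apply]

lemma frobNorm_sq (A : Matrix (Fin d) (Fin d) ℂ) : frobNorm A ^ 2 = (Aᴴ * A).trace.re :=
  Real.sq_sqrt (RCLike.re_le_re (posSemidef_conjTranspose_mul_self A).trace_nonneg)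

lemma frobNorm_conjTranspose (A : Matrix (Fin d) (Fin d) ℂ) : frobNorm Aᴴ = frobNorm A := by
  rw [frobNorm, frobNorm, conjTranspose_conjTranspose, trace_mul_comm]

lemma re_trace_conjTranspose_mul_le (A B : Matrix (Fin d) (Fin d) ℂ) :
    (Aᴴ * B).trace.re ≤ frobNorm A * frobNorm B := by
  calc (Aᴴ * B).trace.re = ∑ i, ∑ j, (star (A j i) * B j i).re := by
        simp [trace, mul_apply, Complex.re_sum]
    _ ≤ ∑ p : Fin d × Fin d, ‖A p.2 p.1‖ * ‖B p.2 p.1‖ := by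
        rw [Fintype.sum_prod_type]
        gcongr with i _ j _
        exact (Complex.re_le_norm _).trans_eq (by rw [norm_mul, norm_star])
    _ ≤ √(∑ p : Fin d × Fin d, ‖A p.2 p.1‖ ^ 2) * √(∑ p : Fin d × Fin d, ‖B p.2 p.1‖ ^ 2) :=
        Real.sum_mul_le_sqrt_mul_sqrt _ _ _
    _ = frobNorm A * frobNorm B := by
        rw [frobNorm, frobNorm, re_trace_conjTranspose_mul_self, re_trace_conjTranspose_mul_self,
          Fintype.sum_prod_type, Fintype.sum_prod_type]

lemma frobNorm_mul_le_of_star_mul_le_one {U : Matrix (Fin d) (Fin d) ℂ} (hU : star U * U ≤ 1)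
    (C : Matrix (Fin d) (Fin d) ℂ) : frobNorm (U * C) ≤ frobNorm C := by
  refine Real.sqrt_le_sqrt (Complex.le_def.mp (trace_mono ?_)).1
  calc (U * C)ᴴ * (U * C) = star C * (star U * U) * C := by
        rw [conjTranspose_mul, Matrix.mul_assoc, Matrix.mul_assoc, Matrix.mul_assoc]; rfl
    _ ≤ star C * 1 * C := star_left_conjugate_le_conjugate hU C
    _ = Cᴴ * C := by rw [Matrix.mul_one]; rfl

lemma nucNorm_mul_le (A C : Matrix (Fin d) (Fin d) ℂ) :
    nucNorm (A * C) ≤ frobNorm A * frobNorm C := by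
  obtain ⟨U, hU, hUabs⟩ := (A * C).exists_star_mul_le_one_and_star_mul_eq_abs
  calc nucNorm (A * C) = ((U * Cᴴ)ᴴ * A).trace.re := by
        rw [nucNorm_eq_re_trace_abs, ← hUabs, ← Matrix.mul_assoc, trace_mul_cycle,
          conjTranspose_mul, conjTranspose_conjTranspose]
        rfl
    _ ≤ frobNorm (U * Cᴴ) * frobNorm A := re_trace_conjTranspose_mul_le _ _
    _ ≤ frobNorm C * frobNorm A := by
        gcongr
        · exact Real.sqrt_nonneg _
        · exact (frobNorm_mul_le_of_star_mul_le_one hU _).trans_eq (frobNorm_conjTranspose C)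
    _ = frobNorm A * frobNorm C := mul_comm _ _

lemma nucNorm_mul_sq_le (A : Matrix (Fin d) (Fin d) ℂ) {B : Matrix (Fin d) (Fin d) ℂ}
    (hB : 0 ≤ B) : nucNorm (A * B) ^ 2 ≤ (Aᴴ * A * B).trace.re * B.trace.re := by
  set S := CFC.sqrt B
  have hS : Sᴴ = S := (CFC.sqrt_nonneg B).posSemidef.1.eq
  have hSS : S * S = B := CFC.sqrt_mul_sqrt_self B hB
  have hAS : frobNorm (A * S) ^ 2 = (Aᴴ * A * B).trace.re := by
    rw [frobNorm_sq, conjTranspose_mul, hS, Matrix.mul_assoc, trace_mul_comm, ← hSS]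
    simp only [Matrix.mul_assoc]
  have hS2 : frobNorm S ^ 2 = B.trace.re := by rw [frobNorm_sq, hS, hSS]
  calc nucNorm (A * B) ^ 2 = nucNorm (A * S * S) ^ 2 := by rw [Matrix.mul_assoc, hSS]
    _ ≤ (frobNorm (A * S) * frobNorm S) ^ 2 := by
        gcongr
        · exact nucNorm_nonneg _
        · exact nucNorm_mul_le _ _
    _ = (Aᴴ * A * B).trace.re * B.trace.re := by rw [mul_pow, hAS, hS2]

lemma posPart_eq_cfc_posPart {X : Matrix (Fin d) (Fin d) ℂ} (hX : X.IsHermitian) :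
    posPart hX = X⁺ := by
  rw [CFC.posPart_def, cfcₙ_eq_cfc, hX.cfc_eq, IsHermitian.cfc, Unitary.conjStarAlgAut_apply]
  rfl

lemma nucNorm_eq_re_trace_posPart_add_negPart {X : Matrix (Fin d) (Fin d) ℂ}
    (hX : X.IsHermitian) : nucNorm X = (X⁺).trace.re + (X⁻).trace.re := by
  rw [nucNorm_eq_re_trace_abs, ← CFC.posPart_add_negPart X hX.isSelfAdjoint, trace_add,
    Complex.add_re]

lemma nucNorm_mul_sq_le_of_isStarProjection {Q B : Matrix (Fin d) (Fin d) ℂ}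
    (hQ : IsStarProjection Q) (hB : 0 ≤ B) :
    nucNorm (Q * B) ^ 2 ≤ (Q * B).trace.re * B.trace.re := by
  have hQQ : Qᴴ * Q = Q := by
    rw [← star_eq_conjTranspose, hQ.isSelfAdjoint.star_eq, hQ.isIdempotentElem.eq]
  simpa only [hQQ] using nucNorm_mul_sq_le Q hB

lemma re_trace_posPart_le_nucNorm {X : Matrix (Fin d) (Fin d) ℂ} (hX : X.IsHermitian) :
    (X⁺).trace.re ≤ nucNorm X := by
  rw [nucNorm_eq_re_trace_posPart_add_negPart hX, le_add_iff_nonneg_right]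
  exact RCLike.re_le_re (CFC.negPart_nonneg X).posSemidef.trace_nonneg

lemma re_trace_one_sub_mul_posPart_le {X P : Matrix (Fin d) (Fin d) ℂ} (hX : X.IsHermitian)
    (hP : 0 ≤ P) : ((1 - P) * X⁺).trace.re ≤ nucNorm X - (P * X).trace.re := by
  have hsplit : X⁺ = X + X⁻ := sub_eq_iff_eq_add.mp (CFC.posPart_sub_negPart X hX.isSelfAdjoint)
  have hneg : 0 ≤ (X⁻).trace.re := RCLike.re_le_re (CFC.negPart_nonneg X).posSemidef.trace_nonneg
  have hPneg : 0 ≤ (P * X⁻).trace.re :=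
    RCLike.re_le_re (trace_mul_nonneg hP (CFC.negPart_nonneg X))
  rw [nucNorm_eq_re_trace_posPart_add_negPart hX, sub_mul, one_mul, trace_sub, Complex.sub_re]
  nth_rw 2 [hsplit]
  rw [mul_add, trace_add, Complex.add_re]
  linarith

theorem nucNorm_compl_posPart_sq_le_general {d : ℕ} (X P : Matrix (Fin d) (Fin d) ℂ)
    (hX : X.IsHermitian) (δ : ℝ)
    (hPh : Pᴴ = P) (hPi : P * P = P)
    (hX1 : nucNorm X ≤ 1)
    (hPX : nucNorm X - δ ≤ (P * X).trace.re) :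
    (nucNorm (((1 : Matrix (Fin d) (Fin d) ℂ) - P) * posPart hX)) ^ 2 ≤ δ := by
  have hP : IsStarProjection P := ⟨hPi, hPh⟩
  have hXpos : 0 ≤ X⁺ := CFC.posPart_nonneg X
  have hQX : ((1 - P) * X⁺).trace.re ≤ δ :=
    (re_trace_one_sub_mul_posPart_le hX hP.nonneg).trans (by linarith)
  have hQX0 : 0 ≤ ((1 - P) * X⁺).trace.re :=
    RCLike.re_le_re (trace_mul_nonneg hP.one_sub_nonneg hXpos)
  rw [posPart_eq_cfc_posPart]
  calc nucNorm ((1 - P) * X⁺) ^ 2 ≤ ((1 - P) * X⁺).trace.re * (X⁺).trace.re :=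
        nucNorm_mul_sq_le_of_isStarProjection hP.one_sub hXpos
    _ ≤ δ * 1 := mul_le_mul hQX ((re_trace_posPart_le_nucNorm hX).trans hX1)
        (RCLike.re_le_re hXpos.posSemidef.trace_nonneg) (hQX0.trans hQX)
    _ = δ := mul_one δ

/-- If Hermitian `X` satisfies `Tr(X⁻) ≤ δ`, `‖X‖₁ ≤ 1`, and `P` is an orthogonal
projection with `Tr(PX) ≥ ‖X‖₁ - δ`, for some `0 ≤ δ ≤ 1`, then
`‖(Id - P)X⁺‖₁² ≤ δ`. -/
theorem nucNorm_compl_posPart_sq_le {d : ℕ} (X P : Matrix (Fin d) (Fin d) ℂ)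
    (hX : X.IsHermitian) (δ : ℝ) (hδ0 : 0 ≤ δ) (hδ1 : δ ≤ 1)
    (hPh : Pᴴ = P) (hPi : P * P = P)
    (hX1 : nucNorm X ≤ 1)
    (hXneg : (negPart hX).trace.re ≤ δ)
    (hPX : nucNorm X - δ ≤ (P * X).trace.re) :
    (nucNorm (((1 : Matrix (Fin d) (Fin d) ℂ) - P) * posPart hX)) ^ 2 ≤ δ :=
  nucNorm_compl_posPart_sq_le_general X P hX δ hPh hPi hX1 hPX
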